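/- Let (Ω₁, P₁) and (Ω₂, P₂) be probability spaces and let P be the product measure on Ω₁ × Ω₂. Let D be a finite set of n ≥ 2 points, let w : D → [0,1] satisfy Σ_{d ∈ D} w_d ≥ n(1 − 2ε + 2ε²) for some 0 < ε ≤ 1/2, and fix 0 < δ < 1, 0 < c < 1, and an integer k ≥ 1. For each d ∈ D let X^d : Ω₁ → [0,1] be a random variable with P₁(X^d < w_d − δ) ≤ e^{−2kδ²}, and let (U_d)_{d ∈ D} be independent random variables on Ω₂, each uniformly distributed on [0,1]. Define Y_d : Ω₁ × Ω₂ → {0,1} by Y_d(ω₁, ω₂) = 1 if U_d(ω₂) < X^d(ω₁) and 0 otherwise. Then P( Σ_{d ∈ D} Y_d ≥ n(1 − 2ε + 2ε² − δ − c) ) ≥ (1 − n e^{−2kδ²})(1 − e^{−2nc²}). -/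

import Mathlib

/-!
Call `ω₁` good when `w d - δ ≤ X d ω₁` for every `d`. By the union bound the good set has
probability at least `1 - n e^{-2kδ²}`, and on it `∑ d, X d ω₁ ≥ n(1 - 2ε + 2ε² - δ)`.
For a fixed good `ω₁` the indicators of `U d < X d ω₁` are independent Bernoulli variables
with means `X d ω₁`, so Hoeffding's inequality puts their sum above `∑ d, X d ω₁ - n c` with
probability at least `1 - e^{-2nc²}`. Integrating this slice bound over the good set
multiplies the two probabilities.
-/

open MeasureTheory ProbabilityTheory Real

section

variable {Ω ι : Type*} [MeasurableSpace Ω] {μ : Measure Ω} [IsProbabilityMeasure μ] [Fintype ι]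

theorem measureReal_sum_le_sum_integral_sub_le {Y : ι → Ω → ℝ} (hindep : iIndepFun Y μ)
    (hmeas : ∀ i, Measurable (Y i)) (hY : ∀ i ω, Y i ω ∈ Set.Icc (0 : ℝ) 1) {c : ℝ}
    (hc : 0 ≤ c) :
    μ.real {ω | ∑ i, Y i ω ≤ ∑ i, μ[Y i] - Fintype.card ι * c} ≤
      exp (-2 * Fintype.card ι * c ^ 2) := by
  have hsubG : ∀ i ∈ Finset.univ,
      HasSubgaussianMGF (fun ω ↦ μ[Y i] - Y i ω) ((‖(0 : ℝ) - -1‖₊ / 2) ^ 2) μ := by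
    intro i _
    -- Hoeffding's lemma for `-Y i`, which takes values in `[-1, 0]`
    refine (hasSubgaussianMGF_of_mem_Icc (X := fun ω ↦ -Y i ω) (hmeas i).neg.aemeasurable
      (ae_of_all _ fun ω ↦ ?_)).congr (ae_of_all _ fun ω ↦ ?_)
    · exact ⟨neg_le_neg (hY i ω).2, neg_nonpos.2 (hY i ω).1⟩
    · simp only [integral_neg]; ring
  have hindep' : iIndepFun (fun i ω ↦ μ[Y i] - Y i ω) μ :=
    hindep.comp (fun i y ↦ (∫ ω, Y i ω ∂μ) - y) fun _ ↦ measurable_const.sub measurable_id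
  have h := HasSubgaussianMGF.measure_sum_ge_le_of_iIndepFun hindep' hsubG
    (ε := Fintype.card ι * c) (by positivity)
  convert h using 2
  · ext ω
    simp only [Set.mem_ofPred_eq, Finset.sum_sub_distrib]
    constructor <;> intro h <;> linarith
  · norm_num
    rcases (Fintype.card ι).eq_zero_or_pos with hn | hn
    · simp [hn]
    · field_simp; ring

theorem ofReal_one_sub_card_mul_le_measure_iInter {s : ι → Set Ω} (hs : ∀ i, MeasurableSet (s i))
    {a : ℝ} (ha : 0 ≤ a) (h : ∀ i, μ (s i)ᶜ ≤ ENNReal.ofReal a) :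
    ENNReal.ofReal (1 - Fintype.card ι * a) ≤ μ (⋂ i, s i) := by
  rw [← ofReal_measureReal]
  refine ENNReal.ofReal_le_ofReal ?_
  have hcompl : μ.real (⋂ i, s i)ᶜ ≤ Fintype.card ι * a := by
    rw [Set.compl_iInter]
    calc μ.real (⋃ i, (s i)ᶜ) ≤ ∑ i, μ.real (s i)ᶜ := measureReal_iUnion_fintype_le _
      _ ≤ ∑ _i : ι, a := Finset.sum_le_sum fun i _ ↦ ENNReal.toReal_le_of_le_ofReal ha (h i)
      _ = Fintype.card ι * a := by simp
  rw [measureReal_compl (MeasurableSet.iInter hs), probReal_univ] at hcompl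
  linarith

end

theorem measure_lt_of_map_eq_uniform {Ω : Type*} [MeasurableSpace Ω] {P : Measure Ω} {U : Ω → ℝ}
    (hU : Measurable U) (hunif : P.map U = volume.restrict (Set.Icc 0 1)) {x : ℝ}
    (hx : x ∈ Set.Icc (0 : ℝ) 1) :
    P {ω | U ω < x} = ENNReal.ofReal x := by
  have : Set.Iio x ∩ Set.Icc 0 1 = Set.Ico 0 x := by
    ext u
    simp only [Set.mem_inter_iff, Set.mem_Iio, Set.mem_Icc, Set.mem_Ico]
    constructor
    · rintro ⟨hux, hu0, -⟩; exact ⟨hu0, hux⟩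
    · rintro ⟨hu0, hux⟩; exact ⟨hux, hu0, hux.le.trans hx.2⟩
  change P (U ⁻¹' Set.Iio x) = _
  rw [← Measure.map_apply hU measurableSet_Iio, hunif,
    Measure.restrict_apply measurableSet_Iio, this, Real.volume_Ico, sub_zero]

theorem MeasureTheory.Measure.ofReal_mul_le_prod_apply {α β : Type*} [MeasurableSpace α] [MeasurableSpace β]
    {μ : Measure α} {ν : Measure β} [SFinite ν] {E : Set (α × β)} (hE : MeasurableSet E)
    {A : Set α} {a b : ℝ} (hb : 0 ≤ b) (hA : ENNReal.ofReal a ≤ μ A)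
    (hslice : ∀ x ∈ A, ENNReal.ofReal b ≤ ν (Prod.mk x ⁻¹' E)) :
    ENNReal.ofReal (a * b) ≤ μ.prod ν E := by
  rw [ENNReal.ofReal_mul' hb, Measure.prod_apply hE]
  calc ENNReal.ofReal a * ENNReal.ofReal b ≤ μ A * ENNReal.ofReal b := by gcongr
    _ = ∫⁻ _ in A, ENNReal.ofReal b ∂μ := by rw [setLIntegral_const, mul_comm]
    _ ≤ ∫⁻ x in A, ν (Prod.mk x ⁻¹' E) ∂μ :=
      setLIntegral_mono (measurable_measure_prodMk_left hE) hslice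
    _ ≤ ∫⁻ x, ν (Prod.mk x ⁻¹' E) ∂μ := setLIntegral_le_lintegral _ _

theorem integral_ite_lt_of_map_eq_uniform {Ω : Type*} [MeasurableSpace Ω] {P : Measure Ω}
    {U : Ω → ℝ} (hU : Measurable U) (hunif : P.map U = volume.restrict (Set.Icc 0 1)) {x : ℝ}
    (hx : x ∈ Set.Icc (0 : ℝ) 1) :
    ∫ ω, (if U ω < x then (1 : ℝ) else 0) ∂P = x := by
  have hS : MeasurableSet {ω | U ω < x} := measurableSet_lt hU measurable_const
  calc ∫ ω, (if U ω < x then (1 : ℝ) else 0) ∂P = ∫ ω, {ω | U ω < x}.indicator 1 ω ∂P := by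
        simp only [Set.indicator_apply, Set.mem_ofPred_eq, Pi.one_apply]
    _ = x := by
      rw [integral_indicator_one hS, measureReal_def, measure_lt_of_map_eq_uniform hU hunif hx,
        ENNReal.toReal_ofReal hx.1]

theorem ofReal_one_sub_exp_le_measure_sum_sub_lt_sum_ite_lt {Ω ι : Type*} [MeasurableSpace Ω]
    {P : Measure Ω} [IsProbabilityMeasure P] [Fintype ι] {U : ι → Ω → ℝ}
    (hU : ∀ i, Measurable (U i)) (hindep : iIndepFun U P)
    (hunif : ∀ i, P.map (U i) = volume.restrict (Set.Icc 0 1))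
    {x : ι → ℝ} (hx : ∀ i, x i ∈ Set.Icc (0 : ℝ) 1) {c : ℝ} (hc : 0 ≤ c) :
    ENNReal.ofReal (1 - exp (-2 * Fintype.card ι * c ^ 2)) ≤
      P {ω | ∑ i, x i - Fintype.card ι * c < ∑ i, if U i ω < x i then (1 : ℝ) else 0} := by
  have hY : ∀ i, Measurable fun ω ↦ if U i ω < x i then (1 : ℝ) else 0 := fun i ↦
    Measurable.ite (measurableSet_lt (hU i) measurable_const) measurable_const measurable_const
  have hindepY : iIndepFun (fun i ω ↦ if U i ω < x i then (1 : ℝ) else 0) P :=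
    hindep.comp (fun i u ↦ if u < x i then (1 : ℝ) else 0) fun i ↦
      Measurable.ite measurableSet_Iio measurable_const measurable_const
  have htail := measureReal_sum_le_sum_integral_sub_le hindepY hY
    (fun i ω ↦ by split_ifs <;> simp) hc
  simp only [integral_ite_lt_of_map_eq_uniform (hU _) (hunif _) (hx _)] at htail
  have hcompl : {ω | ∑ i, x i - Fintype.card ι * c < ∑ i, if U i ω < x i then (1 : ℝ) else 0} =
      {ω | ∑ i, (if U i ω < x i then (1 : ℝ) else 0) ≤ ∑ i, x i - Fintype.card ι * c}ᶜ := by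
    ext ω
    simp only [Set.mem_compl_iff, Set.mem_ofPred_eq, not_le]
  rw [← ofReal_measureReal, hcompl, measureReal_compl (measurableSet_le
    (Finset.measurable_sum _ fun i _ ↦ hY i) measurable_const), probReal_univ]
  exact ENNReal.ofReal_le_ofReal (by linarith)

theorem empirical_error_probabilistic_averaging_general
    {Ω₁ Ω₂ ι : Type*} [MeasurableSpace Ω₁] [MeasurableSpace Ω₂]
    (P₁ : Measure Ω₁) (P₂ : Measure Ω₂)
    [IsProbabilityMeasure P₁] [IsProbabilityMeasure P₂]
    [Fintype ι]
    (w : ι → ℝ)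
    (ε : ℝ)
    (hsum : ∑ d, w d ≥ (Fintype.card ι : ℝ) * (1 - 2 * ε + 2 * ε ^ 2))
    (δ c : ℝ) (hc0 : 0 < c)
    (k : ℕ)
    (X : ι → Ω₁ → ℝ)
    (hXmeas : ∀ d, Measurable (X d))
    (hXrange : ∀ d ω, X d ω ∈ Set.Icc (0 : ℝ) 1)
    (hXdev : ∀ d, P₁ {ω | X d ω < w d - δ} ≤ ENNReal.ofReal (exp (-2 * k * δ ^ 2)))
    (U : ι → Ω₂ → ℝ)
    (hUmeas : ∀ d, Measurable (U d))
    (hUindep : iIndepFun U P₂)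
    (hUunif : ∀ d, Measure.map (U d) P₂ = volume.restrict (Set.Icc (0 : ℝ) 1)) :
    (P₁.prod P₂) {p | (Fintype.card ι : ℝ) * (1 - 2 * ε + 2 * ε ^ 2 - δ - c) ≤
        ∑ d, (if U d p.2 < X d p.1 then (1 : ℝ) else 0)} ≥
      ENNReal.ofReal ((1 - (Fintype.card ι : ℝ) * exp (-2 * k * δ ^ 2)) *
        (1 - exp (-2 * (Fintype.card ι : ℝ) * c ^ 2))) := by
  have hE : MeasurableSet {p : Ω₁ × Ω₂ | (Fintype.card ι : ℝ) * (1 - 2 * ε + 2 * ε ^ 2 - δ - c) ≤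
      ∑ d, (if U d p.2 < X d p.1 then (1 : ℝ) else 0)} :=
    measurableSet_le measurable_const <| Finset.measurable_sum _ fun d _ ↦ Measurable.ite
      (measurableSet_lt ((hUmeas d).comp measurable_snd) ((hXmeas d).comp measurable_fst))
      measurable_const measurable_const
  have hgood : ENNReal.ofReal (1 - Fintype.card ι * exp (-2 * k * δ ^ 2)) ≤
      P₁ (⋂ d, {ω | w d - δ ≤ X d ω}) :=
    ofReal_one_sub_card_mul_le_measure_iInter
      (fun d ↦ measurableSet_le measurable_const (hXmeas d)) (exp_pos _).le
      fun d ↦ by simpa only [Set.compl_ofPred, not_le] using hXdev d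
  refine Measure.ofReal_mul_le_prod_apply hE
    (sub_nonneg.2 (exp_le_one_iff.2 (by nlinarith [sq_nonneg c]))) hgood fun ω₁ hω₁ ↦ ?_
  have hmean : (Fintype.card ι : ℝ) * (1 - 2 * ε + 2 * ε ^ 2 - δ) ≤ ∑ d, X d ω₁ := by
    have hle : ∀ d, w d - δ ≤ X d ω₁ := Set.mem_iInter.1 hω₁
    have := Finset.sum_le_sum fun d (_ : d ∈ Finset.univ) ↦ hle d
    simp only [Finset.sum_sub_distrib, Finset.sum_const, Finset.card_univ, nsmul_eq_mul] at this
    linarith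
  refine (ofReal_one_sub_exp_le_measure_sum_sub_lt_sum_ite_lt hUmeas hUindep hUunif
    (hXrange · ω₁) hc0.le).trans (measure_mono fun ω₂ hω₂ ↦ ?_)
  simp only [Set.mem_preimage, Set.mem_ofPred_eq] at hω₂ ⊢
  linarith

/-- empirical error bound for the probabilistic averaging scheme.
`Ω₁` carries the forest randomness, `Ω₂` the classification tosses; `X d` is the average
score of point `d` over the forest (satisfying a Hoeffding-type deviation bound from the
weight `w d`), `U d` are independent uniform-on-`[0,1]` tosses, and point `d` is correctly
classified when `U d < X d`. Then with probability (w.r.t. the product measure) at least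
`(1 - n e^{-2kδ²})(1 - e^{-2nc²})`, at least `n(1 - 2ε + 2ε² - δ - c)` points are
correctly classified. -/
theorem empirical_error_probabilistic_averaging
    {Ω₁ Ω₂ ι : Type*} [MeasurableSpace Ω₁] [MeasurableSpace Ω₂]
    (P₁ : Measure Ω₁) (P₂ : Measure Ω₂)
    [IsProbabilityMeasure P₁] [IsProbabilityMeasure P₂]
    [Fintype ι] (hn : 2 ≤ Fintype.card ι)
    (w : ι → ℝ) (hw : ∀ d, w d ∈ Set.Icc (0 : ℝ) 1)
    (ε : ℝ) (hε0 : 0 < ε) (hε : ε ≤ 1 / 2)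
    (hsum : ∑ d, w d ≥ (Fintype.card ι : ℝ) * (1 - 2 * ε + 2 * ε ^ 2))
    (δ c : ℝ) (hδ0 : 0 < δ) (hδ : δ < 1) (hc0 : 0 < c) (hc : c < 1)
    (k : ℕ) (hk : 1 ≤ k)
    (X : ι → Ω₁ → ℝ)
    (hXmeas : ∀ d, Measurable (X d))
    (hXrange : ∀ d ω, X d ω ∈ Set.Icc (0 : ℝ) 1)
    (hXdev : ∀ d, P₁ {ω | X d ω < w d - δ} ≤ ENNReal.ofReal (exp (-2 * k * δ ^ 2)))
    (U : ι → Ω₂ → ℝ)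
    (hUmeas : ∀ d, Measurable (U d))
    (hUindep : iIndepFun U P₂)
    (hUunif : ∀ d, Measure.map (U d) P₂ = volume.restrict (Set.Icc (0 : ℝ) 1)) :
    (P₁.prod P₂) {p | (Fintype.card ι : ℝ) * (1 - 2 * ε + 2 * ε ^ 2 - δ - c) ≤
        ∑ d, (if U d p.2 < X d p.1 then (1 : ℝ) else 0)} ≥
      ENNReal.ofReal ((1 - (Fintype.card ι : ℝ) * exp (-2 * k * δ ^ 2)) *
        (1 - exp (-2 * (Fintype.card ι : ℝ) * c ^ 2))) :=
  empirical_error_probabilistic_averaging_general P₁ P₂ w ε hsum δ c hc0 k X hXmeas hXrange hXdev U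
    hUmeas hUindep hUunif
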